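/- Let G be a finite group, let p, q, r be pairwise distinct primes, and suppose G has an automorphism α of order exactly p·q·r that has no regular cycle. For each positive integer d, let ζ_d(α) denote the number of elements of G whose cycle length under α is exactly d. Then |G| = 4·ζ₁(α), ζ₁(α) = ζ_{pq}(α) = ζ_{pr}(α) = ζ_{qr}(α), and the fixed-point subgroup fix(α) = {g ∈ G : α(g) = g} is a normal subgroup of G. -/

import Mathlib

/-!
Every cycle length of `α` divides `pqr` and differs from it, so it divides `pq`, `pr` or `qr`:
`G` is the union of the three proper subgroups `Fix(α^{pq})`, `Fix(α^{pr})`, `Fix(α^{qr})`.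
By Scorza's theorem each of them has index 2 and any two of them meet inside the third. As
`gcd(pq, pr, qr) = 1`, that common intersection is `Fix(α)`, which is therefore normal of index 4
(the intersection of two distinct subgroups of index 2). Since `Fix(α^p) ≤ Fix(α)`, no point has a
prime cycle length, so `Fix(α^{pq})` consists of the fixed points and the points of cycle length
`pq`, whence `ζ_{pq} = |G|/2 - ζ₁ = ζ₁`.
-/

/-- The subgroup of fixed points of an automorphism `α` of a group `G`. -/
def fixSubgroup {G : Type*} [Group G] (α : MulAut G) : Subgroup G where
  carrier := {g : G | α g = g}
  one_mem' := map_one α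
  mul_mem' := by
    intro a b ha hb
    simp only [Set.mem_setOf_eq] at *
    rw [map_mul, ha, hb]
  inv_mem' := by
    intro a ha
    simp only [Set.mem_setOf_eq] at *
    rw [map_inv, ha]

/-- `zeta α d` is the number of elements of `G` whose cycle length under `α` is exactly `d`. -/
noncomputable def zeta {G : Type*} [Group G] (α : MulAut G) (d : ℕ) : ℕ :=
  Nat.card {g : G // Function.minimalPeriod (⇑α) g = d}

namespace Subgroup

variable {G : Type*} [Group G] {A B C : Subgroup G}

theorem eq_top_or_eq_top_of_forall_mem_or (hcover : ∀ g, g ∈ A ∨ g ∈ B) : A = ⊤ ∨ B = ⊤ := by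
  simp only [eq_top_iff' A, eq_top_iff' B]
  by_contra! ⟨⟨a, ha⟩, b, hb⟩
  have haB : a ∈ B := (hcover a).resolve_left ha
  have hbA : b ∈ A := (hcover b).resolve_right hb
  rcases hcover (b * a) with hba | hba
  · exact ha ((A.mul_mem_cancel_left hbA).mp hba)
  · exact hb ((B.mul_mem_cancel_right haB).mp hba)

theorem exists_mem_notMem_notMem_of_forall_mem_or (hcover : ∀ g, g ∈ A ∨ g ∈ B ∨ g ∈ C)
    (hB : B ≠ ⊤) (hC : C ≠ ⊤) : ∃ a ∈ A, a ∉ B ∧ a ∉ C := by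
  by_contra! h
  have hBC : ∀ g, g ∈ B ∨ g ∈ C := fun g => by
    by_cases hgB : g ∈ B
    · exact .inl hgB
    · exact (hcover g).elim (fun hgA => .inr (h g hgA hgB)) id
  exact (eq_top_or_eq_top_of_forall_mem_or hBC).elim hB hC

theorem inf_le_of_forall_mem_or (hcover : ∀ g, g ∈ A ∨ g ∈ B ∨ g ∈ C)
    (hA : A ≠ ⊤) (hB : B ≠ ⊤) : A ⊓ B ≤ C := by
  obtain ⟨c, hcC, hcA, hcB⟩ := exists_mem_notMem_notMem_of_forall_mem_or (A := C) (B := A)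
    (C := B) (fun g => by have := hcover g; tauto) hA hB
  rintro g ⟨hgA, hgB⟩
  rcases hcover (g * c) with hgc | hgc | hgc
  · exact absurd ((A.mul_mem_cancel_left hgA).mp hgc) hcA
  · exact absurd ((B.mul_mem_cancel_left hgB).mp hgc) hcB
  · exact (C.mul_mem_cancel_right hcC).mp hgc

theorem mul_mem_of_forall_mem_or (hcover : ∀ g, g ∈ A ∨ g ∈ B ∨ g ∈ C)
    (hA : A ≠ ⊤) (hB : B ≠ ⊤) (hC : C ≠ ⊤) {x y : G} (hxA : x ∈ A) (hyA : y ∈ A)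
    (hxB : x ∉ B) (hyB : y ∉ B) : x * y ∈ B := by
  obtain ⟨c, hcC, hcA, hcB⟩ := exists_mem_notMem_notMem_of_forall_mem_or (A := C) (B := A)
    (C := B) (fun g => by have := hcover g; tauto) hA hB
  have hAC : A ⊓ C ≤ B :=
    inf_le_of_forall_mem_or (B := C) (C := B) (fun g => by have := hcover g; tauto) hA hC
  have hmul_mem : ∀ z ∈ A, z ∉ B → z * c ∈ B := fun z hzA hzB => by
    rcases hcover (z * c) with hzc | hzc | hzc
    · exact absurd ((A.mul_mem_cancel_left hzA).mp hzc) hcA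
    · exact hzc
    · exact absurd (hAC ⟨hzA, (C.mul_mem_cancel_right hcC).mp hzc⟩) hzB
  have := B.mul_mem (hmul_mem x hxA hxB)
    (B.inv_mem (hmul_mem y⁻¹ (A.inv_mem hyA) (by rwa [B.inv_mem_iff])))
  simpa [mul_assoc] using this

theorem index_eq_two_of_forall_mem_or (hcover : ∀ g, g ∈ A ∨ g ∈ B ∨ g ∈ C)
    (hA : A ≠ ⊤) (hB : B ≠ ⊤) (hC : C ≠ ⊤) : A.index = 2 := by
  have hcover' : ∀ g, g ∈ B ∨ g ∈ A ∨ g ∈ C := fun g => by have := hcover g; tauto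
  obtain ⟨b, hbB, hbA, hbC⟩ := exists_mem_notMem_notMem_of_forall_mem_or hcover' hA hC
  refine index_eq_two_iff_exists_notMem_and.mpr ⟨b, hbA, fun g => or_iff_not_imp_right.mpr ?_⟩
  intro hgA
  rcases hcover g with hgA' | hgB | hgC
  · exact absurd hgA' hgA
  · exact mul_mem_of_forall_mem_or hcover' hB hA hC hgB hbB hgA hbA
  · have hgB : g ∉ B := fun hgB =>
      hgA (inf_le_of_forall_mem_or (A := B) (B := C) (C := A)
        (fun g => by have := hcover g; tauto) hB hC ⟨hgB, hgC⟩)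
    rcases hcover (g * b) with hgb | hgb | hgb
    · exact hgb
    · exact absurd ((B.mul_mem_cancel_right hbB).mp hgb) hgB
    · exact absurd ((C.mul_mem_cancel_left hgC).mp hgb) hbC

theorem index_inf_eq_four (hA : A.index = 2) (hB : B.index = 2) (hAB : ¬A ≤ B) :
    (A ⊓ B).index = 4 := by
  have hle : (A ⊓ B).index ≤ A.index * B.index := index_inf_le
  have hne_zero : (A ⊓ B).index ≠ 0 := index_inf_ne_zero (by omega) (by omega)
  rw [← relIndex_mul_index inf_le_left, inf_relIndex_left, hA] at hle hne_zero ⊢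
  have hne_one : B.relIndex A ≠ 1 := mt relIndex_eq_one.mp hAB
  rw [hB] at hle
  omega

theorem index_inf_eq_four_of_forall_mem_or (hcover : ∀ g, g ∈ A ∨ g ∈ B ∨ g ∈ C)
    (hA : A ≠ ⊤) (hB : B ≠ ⊤) (hC : C ≠ ⊤) : (A ⊓ B).index = 4 := by
  have hcover' : ∀ g, g ∈ B ∨ g ∈ A ∨ g ∈ C := fun g => by have := hcover g; tauto
  obtain ⟨a, haA, haB, -⟩ := exists_mem_notMem_notMem_of_forall_mem_or hcover hB hC
  exact index_inf_eq_four (index_eq_two_of_forall_mem_or hcover hA hB hC)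
    (index_eq_two_of_forall_mem_or hcover' hB hA hC) fun hAB => haB (hAB haA)

end Subgroup

theorem MulAut.coe_pow {G : Type*} [Group G] (α : MulAut G) (n : ℕ) : ⇑(α ^ n) = (⇑α)^[n] := by
  induction n with
  | zero => rfl
  | succ n ih => rw [pow_succ, coe_mul, ih, Function.iterate_succ]

theorem Nat.dvd_or_dvd_or_eq_of_dvd_prime_mul_prime {p q d : ℕ} (hp : p.Prime) (hq : q.Prime)
    (hd : d ∣ p * q) : d ∣ p ∨ d ∣ q ∨ d = p * q := by
  obtain ⟨a, b, ha, hb, rfl⟩ := Nat.dvd_mul.mp hd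
  rcases hp.eq_one_or_self_of_dvd a ha with rfl | rfl <;>
    rcases hq.eq_one_or_self_of_dvd b hb with rfl | rfl <;> simp

theorem Nat.dvd_mul_or_dvd_mul_or_dvd_mul_of_dvd_mul_mul {p q r d : ℕ} (hp : p.Prime)
    (hq : q.Prime) (hr : r.Prime) (hd : d ∣ p * q * r) (hne : d ≠ p * q * r) :
    d ∣ p * q ∨ d ∣ p * r ∨ d ∣ q * r := by
  obtain ⟨a, b, ha, hb, rfl⟩ := Nat.dvd_mul.mp hd
  rcases hr.eq_one_or_self_of_dvd b hb with rfl | rfl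
  · exact .inl (by simpa using ha)
  rcases Nat.dvd_or_dvd_or_eq_of_dvd_prime_mul_prime hp hq ha with hap | haq | rfl
  · exact .inr (.inl (mul_dvd_mul_right hap _))
  · exact .inr (.inr (mul_dvd_mul_right haq _))
  · exact absurd rfl hne

theorem Nat.gcd_mul_gcd_mul_mul_eq_one {p q r : ℕ} (hp : p.Prime) (hq : q.Prime) (hr : r.Prime)
    (hpq : p ≠ q) (hpr : p ≠ r) (hqr : q ≠ r) : ((p * q).gcd (p * r)).gcd (q * r) = 1 := by
  rw [Nat.gcd_mul_left, (Nat.coprime_primes hq hr).mpr hqr, mul_one]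
  exact Nat.Coprime.mul_right ((Nat.coprime_primes hp hq).mpr hpq)
    ((Nat.coprime_primes hp hr).mpr hpr)

section Periods

variable {G : Type*} [Group G] (α : MulAut G)

theorem mem_fixSubgroup_pow_iff {n : ℕ} {g : G} :
    g ∈ fixSubgroup (α ^ n) ↔ Function.minimalPeriod α g ∣ n := by
  change (α ^ n) g = g ↔ _
  rw [MulAut.coe_pow]
  exact Function.isPeriodicPt_iff_minimalPeriod_dvd

theorem fixSubgroup_pow_eq_top_iff {n : ℕ} : fixSubgroup (α ^ n) = ⊤ ↔ orderOf α ∣ n := by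
  rw [orderOf_dvd_iff_pow_eq_one, Subgroup.eq_top_iff', MulEquiv.ext_iff]
  rfl

theorem fixSubgroup_pow_inf_fixSubgroup_pow (m n : ℕ) :
    fixSubgroup (α ^ m) ⊓ fixSubgroup (α ^ n) = fixSubgroup (α ^ m.gcd n) := by
  ext g
  simp only [Subgroup.mem_inf, mem_fixSubgroup_pow_iff, Nat.dvd_gcd_iff]

theorem fixSubgroup_pow_mono {m n : ℕ} (h : m ∣ n) : fixSubgroup (α ^ m) ≤ fixSubgroup (α ^ n) :=
  fun _ hg => (mem_fixSubgroup_pow_iff α).mpr (((mem_fixSubgroup_pow_iff α).mp hg).trans h)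

theorem mem_fixSubgroup_iff {g : G} : g ∈ fixSubgroup α ↔ Function.minimalPeriod α g = 1 :=
  Function.minimalPeriod_eq_one_iff_isFixedPt.symm

theorem minimalPeriod_dvd_orderOf (g : G) : Function.minimalPeriod α g ∣ orderOf α := by
  rw [← mem_fixSubgroup_pow_iff, (fixSubgroup_pow_eq_top_iff α).mpr dvd_rfl]
  trivial

theorem fixSubgroup_pow_ne_top {n : ℕ} (hn : 0 < n) (hlt : n < orderOf α) :
    fixSubgroup (α ^ n) ≠ ⊤ :=
  fun h => (Nat.le_of_dvd hn ((fixSubgroup_pow_eq_top_iff α).mp h)).not_gt hlt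

theorem zeta_one_eq_card_fixSubgroup : zeta α 1 = Nat.card (fixSubgroup α) :=
  Nat.card_congr (Equiv.subtypeEquivRight fun _ => Function.minimalPeriod_eq_one_iff_isFixedPt)

theorem zeta_mul_add_zeta_one [Finite G] {p q : ℕ} (hp : p.Prime) (hq : q.Prime)
    (hfix_p : fixSubgroup (α ^ p) ≤ fixSubgroup α) (hfix_q : fixSubgroup (α ^ q) ≤ fixSubgroup α) :
    zeta α (p * q) + zeta α 1 = Nat.card (fixSubgroup (α ^ (p * q))) := by
  classical
  have hmem : ∀ g, g ∈ fixSubgroup (α ^ (p * q)) ↔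
      Function.minimalPeriod α g = p * q ∨ Function.minimalPeriod α g = 1 := fun g => by
    rw [mem_fixSubgroup_pow_iff]
    refine ⟨fun hg => ?_, ?_⟩
    · rcases Nat.dvd_or_dvd_or_eq_of_dvd_prime_mul_prime hp hq hg with hgp | hgq | hgpq
      · exact .inr ((mem_fixSubgroup_iff α).mp (hfix_p ((mem_fixSubgroup_pow_iff α).mpr hgp)))
      · exact .inr ((mem_fixSubgroup_iff α).mp (hfix_q ((mem_fixSubgroup_pow_iff α).mpr hgq)))
      · exact .inl hgpq
    · rintro (hg | hg) <;> simp [hg]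
  have hdisj : Disjoint (fun g => Function.minimalPeriod α g = p * q)
      (fun g => Function.minimalPeriod α g = 1) := by
    have hpq_ne_one : p * q ≠ 1 := (one_lt_mul hp.one_lt.le hq.one_lt).ne'
    exact fun r hr₁ hr₂ g hg => hpq_ne_one ((hr₁ g hg).symm.trans (hr₂ g hg))
  rw [zeta, zeta, ← Nat.card_sum, ← Nat.card_congr (subtypeOrEquiv _ _ hdisj)]
  exact Nat.card_congr (Equiv.subtypeEquivRight fun g => (hmem g).symm)

end Periods

section NoRegularCycle

variable {G : Type*} [Group G] {α : MulAut G} {p q r : ℕ}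
  (hp : p.Prime) (hq : q.Prime) (hr : r.Prime) (hord : orderOf α = p * q * r)

include hp hq hr hord

theorem fixSubgroup_pow_mul_ne_top : fixSubgroup (α ^ (p * q)) ≠ ⊤ :=
  fixSubgroup_pow_ne_top α (Nat.mul_pos hp.pos hq.pos)
    (hord ▸ lt_mul_of_one_lt_right (Nat.mul_pos hp.pos hq.pos) hr.one_lt)

variable (hnoreg : ∀ g : G, Function.minimalPeriod α g ≠ orderOf α)

include hnoreg

theorem forall_mem_fixSubgroup_pow_mul_or (g : G) :
    g ∈ fixSubgroup (α ^ (p * q)) ∨ g ∈ fixSubgroup (α ^ (p * r)) ∨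
      g ∈ fixSubgroup (α ^ (q * r)) := by
  simp only [mem_fixSubgroup_pow_iff]
  exact Nat.dvd_mul_or_dvd_mul_or_dvd_mul_of_dvd_mul_mul hp hq hr
    (hord ▸ minimalPeriod_dvd_orderOf α g) (hord ▸ hnoreg g)

theorem index_fixSubgroup_pow_mul : (fixSubgroup (α ^ (p * q))).index = 2 :=
  Subgroup.index_eq_two_of_forall_mem_or (forall_mem_fixSubgroup_pow_mul_or hp hq hr hord hnoreg)
    (fixSubgroup_pow_mul_ne_top hp hq hr hord)
    (fixSubgroup_pow_mul_ne_top hp hr hq (by rw [hord, mul_right_comm]))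
    (fixSubgroup_pow_mul_ne_top hq hr hp (by rw [hord]; ring))

variable (hpq : p ≠ q) (hpr : p ≠ r) (hqr : q ≠ r)

include hpq hpr hqr

theorem fixSubgroup_pow_mul_inf_fixSubgroup_pow_mul :
    fixSubgroup (α ^ (p * q)) ⊓ fixSubgroup (α ^ (p * r)) = fixSubgroup α := by
  rw [← inf_eq_left.mpr (Subgroup.inf_le_of_forall_mem_or
      (forall_mem_fixSubgroup_pow_mul_or hp hq hr hord hnoreg)
      (fixSubgroup_pow_mul_ne_top hp hq hr hord)
      (fixSubgroup_pow_mul_ne_top hp hr hq (by rw [hord, mul_right_comm]))),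
    fixSubgroup_pow_inf_fixSubgroup_pow, fixSubgroup_pow_inf_fixSubgroup_pow,
    Nat.gcd_mul_gcd_mul_mul_eq_one hp hq hr hpq hpr hqr, pow_one]

theorem fixSubgroup_pow_le_fixSubgroup : fixSubgroup (α ^ p) ≤ fixSubgroup α :=
  fixSubgroup_pow_mul_inf_fixSubgroup_pow_mul hp hq hr hord hnoreg hpq hpr hqr ▸
    le_inf (fixSubgroup_pow_mono α (dvd_mul_right p q))
      (fixSubgroup_pow_mono α (dvd_mul_right p r))

theorem index_fixSubgroup : (fixSubgroup α).index = 4 := by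
  rw [← fixSubgroup_pow_mul_inf_fixSubgroup_pow_mul hp hq hr hord hnoreg hpq hpr hqr]
  exact Subgroup.index_inf_eq_four_of_forall_mem_or
    (forall_mem_fixSubgroup_pow_mul_or hp hq hr hord hnoreg)
    (fixSubgroup_pow_mul_ne_top hp hq hr hord)
    (fixSubgroup_pow_mul_ne_top hp hr hq (by rw [hord, mul_right_comm]))
    (fixSubgroup_pow_mul_ne_top hq hr hp (by rw [hord]; ring))

theorem card_eq_four_mul_zeta_one : Nat.card G = 4 * zeta α 1 := by
  rw [zeta_one_eq_card_fixSubgroup, ← (fixSubgroup α).card_mul_index,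
    index_fixSubgroup hp hq hr hord hnoreg hpq hpr hqr, mul_comm]

theorem zeta_one_eq_zeta_mul [Finite G] : zeta α 1 = zeta α (p * q) := by
  have hcard := (fixSubgroup (α ^ (p * q))).card_mul_index
  rw [index_fixSubgroup_pow_mul hp hq hr hord hnoreg] at hcard
  have hzeta := zeta_mul_add_zeta_one α hp hq
    (fixSubgroup_pow_le_fixSubgroup hp hq hr hord hnoreg hpq hpr hqr)
    (fixSubgroup_pow_le_fixSubgroup hq hp hr (by rw [hord, mul_comm p q]) hnoreg hpq.symm hqr hpr)
  have hcard_N := card_eq_four_mul_zeta_one hp hq hr hord hnoreg hpq hpr hqr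
  omega

theorem fixSubgroup_normal : (fixSubgroup α).Normal := by
  rw [← fixSubgroup_pow_mul_inf_fixSubgroup_pow_mul hp hq hr hord hnoreg hpq hpr hqr]
  have := Subgroup.normal_of_index_eq_two (index_fixSubgroup_pow_mul hp hq hr hord hnoreg)
  have := Subgroup.normal_of_index_eq_two
    (index_fixSubgroup_pow_mul hp hr hq (by rw [hord, mul_right_comm]) hnoreg)
  infer_instance

end NoRegularCycle

theorem stmt15 {G : Type*} [Group G] [Fintype G]
    (p q r : ℕ) (hp : p.Prime) (hq : q.Prime) (hr : r.Prime)
    (hpq : p ≠ q) (hpr : p ≠ r) (hqr : q ≠ r)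
    (α : MulAut G) (hord : orderOf α = p * q * r)
    (hnoreg : ∀ g : G, Function.minimalPeriod (⇑α) g ≠ orderOf α) :
    Fintype.card G = 4 * zeta α 1 ∧
    zeta α 1 = zeta α (p * q) ∧
    zeta α 1 = zeta α (p * r) ∧
    zeta α 1 = zeta α (q * r) ∧
    (fixSubgroup α).Normal := by
  have hord_prq : orderOf α = p * r * q := by rw [hord, mul_right_comm]
  have hord_qrp : orderOf α = q * r * p := by rw [hord]; ring
  rw [← Nat.card_eq_fintype_card]
  exact ⟨card_eq_four_mul_zeta_one hp hq hr hord hnoreg hpq hpr hqr,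
    zeta_one_eq_zeta_mul hp hq hr hord hnoreg hpq hpr hqr,
    zeta_one_eq_zeta_mul hp hr hq hord_prq hnoreg hpr hpq hqr.symm,
    zeta_one_eq_zeta_mul hq hr hp hord_qrp hnoreg hqr hpq.symm hpr.symm,
    fixSubgroup_normal hp hq hr hord hnoreg hpq hpr hqr⟩
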